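/- Let A be an m×q dual complex matrix and B a q×n dual complex matrix, let N_A be an NDMPI of A, N_B an NDMPI of B, and Z an NDMPI of A·B. Then Z = N_B·N_A if and only if there exists a matrix X satisfying B·X·B = B·N_B·B, X·B·X = X, and (B·X)* = B·X (a {1,2,3}-inverse of B) such that Z = N_B·B·X·N_A. -/

import Mathlib

open Matrix

/-- The dual complex numbers ℂ[ε] with ε² = 0 (dual numbers over ℂ). -/
abbrev DualComplex := DualNumber ℂ

/-- Conjugation on dual complex numbers: star (a + b·ε) = (conj a) + (conj b)·ε. -/
noncomputable instance : StarRing DualComplex where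
  star x := ⟨star x.fst, star x.snd⟩
  star_involutive x := TrivSqZeroExt.ext (star_star x.fst) (star_star x.snd)
  star_mul x y := TrivSqZeroExt.ext
    (by change _ = star y.fst * star x.fst; simp [TrivSqZeroExt.fst_mul, mul_comm])
    (by change _ = star y.fst • star x.snd + MulOpposite.op (star x.fst) • star y.snd; simp [TrivSqZeroExt.snd_mul]; ring)
  star_add x y := TrivSqZeroExt.ext (by change _ = star x.fst + star y.fst; simp) (by change _ = star x.snd + star y.snd; simp)

/-- `X` is a new dual Moore–Penrose inverse (NDMPI) of `M`:
`M*·M·X·M·M* = M*·M·M*`, `X·M·X = X`, `(M·X)* = M·X`, `(X·M)* = X·M`. -/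
def IsNDMPI {m n : ℕ} (M : Matrix (Fin m) (Fin n) DualComplex)
    (X : Matrix (Fin n) (Fin m) DualComplex) : Prop :=
  Mᴴ * M * X * M * Mᴴ = Mᴴ * M * Mᴴ ∧
  X * M * X = X ∧
  (M * X)ᴴ = M * X ∧
  (X * M)ᴴ = X * M

/-! If `N` is a {2,3}-inverse of `B`, then every `X` with `B X B = B N B` and `B X` Hermitian
satisfies `N B X = N`. Indeed `(B X)(B N) = (B N B) N = B N`, and since `B N` and `B X` are
Hermitian, taking adjoints gives `(B N)(B X) = B N`; hence `N B X = N (B N)(B X) = N B N = N`.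
So `N_B B X N_A = N_B N_A` for every such `X`, while `X = N_B` itself is one. -/

namespace Matrix

variable {R : Type*} [Semiring R] [StarRing R] {m n : Type*} [Fintype m] [Fintype n]
  {B : Matrix m n R} {N X : Matrix n m R}

theorem mul_mul_mul_eq_of_isHermitian (hX : B * X * B = B * N * B) (hN : N * B * N = N)
    (hBN : (B * N).IsHermitian) (hBX : (B * X).IsHermitian) : B * N * (B * X) = B * N := by
  have hleft : B * X * (B * N) = B * N := by
    rw [← Matrix.mul_assoc, hX, Matrix.mul_assoc B N B, Matrix.mul_assoc B, hN]
  calc B * N * (B * X) = (B * N)ᴴ * (B * X)ᴴ := by rw [hBN.eq, hBX.eq]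
    _ = (B * X * (B * N))ᴴ := (conjTranspose_mul _ _).symm
    _ = B * N := by rw [hleft, hBN.eq]

theorem mul_mul_eq_of_isHermitian (hX : B * X * B = B * N * B) (hN : N * B * N = N)
    (hBN : (B * N).IsHermitian) (hBX : (B * X).IsHermitian) : N * B * X = N :=
  calc N * B * X = N * B * N * B * X := by rw [hN]
    _ = N * (B * N * (B * X)) := by simp only [Matrix.mul_assoc]
    _ = N := by rw [mul_mul_mul_eq_of_isHermitian hX hN hBN hBX, ← Matrix.mul_assoc, hN]

end Matrix

theorem stmt_14_general {m q n : ℕ}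
    (B : Matrix (Fin q) (Fin n) DualComplex)
    (NA : Matrix (Fin q) (Fin m) DualComplex)
    (NB : Matrix (Fin n) (Fin q) DualComplex) (hNB : IsNDMPI B NB)
    (Z : Matrix (Fin n) (Fin m) DualComplex) :
    Z = NB * NA ↔
      ∃ X : Matrix (Fin n) (Fin q) DualComplex,
        (B * X * B = B * NB * B ∧ X * B * X = X ∧ (B * X)ᴴ = B * X) ∧
        Z = NB * B * X * NA := by
  obtain ⟨-, hNB₂, hNB₃, -⟩ := hNB
  constructor
  · rintro rfl
    exact ⟨NB, ⟨rfl, hNB₂, hNB₃⟩, by rw [hNB₂]⟩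
  · rintro ⟨X, ⟨hX₁, -, hX₃⟩, rfl⟩
    rw [mul_mul_eq_of_isHermitian hX₁ hNB₂ hNB₃ hX₃]

/-- `Z = N_B·N_A` iff there exists a {1,2,3}-inverse `X` of `B`
such that `Z = N_B·B·X·N_A`. -/
theorem stmt_14 {m q n : ℕ} (A : Matrix (Fin m) (Fin q) DualComplex)
    (B : Matrix (Fin q) (Fin n) DualComplex)
    (NA : Matrix (Fin q) (Fin m) DualComplex) (hNA : IsNDMPI A NA)
    (NB : Matrix (Fin n) (Fin q) DualComplex) (hNB : IsNDMPI B NB)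
    (Z : Matrix (Fin n) (Fin m) DualComplex) (hZ : IsNDMPI (A * B) Z) :
    Z = NB * NA ↔
      ∃ X : Matrix (Fin n) (Fin q) DualComplex,
        (B * X * B = B * NB * B ∧ X * B * X = X ∧ (B * X)ᴴ = B * X) ∧
        Z = NB * B * X * NA :=
  stmt_14_general B NA NB hNB Z
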